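/- (Dombrowski's integrability criterion, coordinate version.) Let U ⊆ ℝⁿ be open with a metric g and an affine connection D given by Christoffel symbols Γ. Then the Nijenhuis tensor N of the almost complex structure J^D on TU = U × ℝⁿ vanishes identically (for all pairs of smooth vector fields on TU) if and only if D is flat, i.e. T^D(x) = 0 and R^D(x) = 0 for all x ∈ U. -/

import Mathlib

/-!
STATEMENT 7 (Dombrowski): the Nijenhuis tensor of J^D vanishes identically on TU
iff the connection D is flat (T^D = 0 and R^D = 0 on U).
-/

/-- Torsion of the connection with Christoffel symbols `Γ`. -/
noncomputable def torsion {n : ℕ}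
    (Γ : (Fin n → ℝ) → (Fin n → ℝ) →L[ℝ] (Fin n → ℝ) →L[ℝ] (Fin n → ℝ))
    (x v w : Fin n → ℝ) : Fin n → ℝ :=
  Γ x v w - Γ x w v

/-- Curvature of the connection with Christoffel symbols `Γ`. -/
noncomputable def curv {n : ℕ}
    (Γ : (Fin n → ℝ) → (Fin n → ℝ) →L[ℝ] (Fin n → ℝ) →L[ℝ] (Fin n → ℝ))
    (x v w z : Fin n → ℝ) : Fin n → ℝ :=
  fderiv ℝ Γ x v w z - fderiv ℝ Γ x w v z + Γ x v (Γ x w z) - Γ x w (Γ x v z)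

/-- The almost complex structure `J^D` (with `J^D(v^H) = v^V`, `J^D(v^V) = −v^H`,
where `v^H = (v, −Γ(x)(v)(ξ))`, `v^V = (0,v)`). -/
noncomputable def Jstr {n : ℕ}
    (Γ : (Fin n → ℝ) → (Fin n → ℝ) →L[ℝ] (Fin n → ℝ) →L[ℝ] (Fin n → ℝ))
    (x ξ : Fin n → ℝ) (A : (Fin n → ℝ) × (Fin n → ℝ)) :
    (Fin n → ℝ) × (Fin n → ℝ) :=
  (-(A.2 + Γ x A.1 ξ), A.1 + Γ x (A.2 + Γ x A.1 ξ) ξ)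

/-- The bracket of vector fields on an open subset of ℝ²ⁿ. -/
noncomputable def bracket {n : ℕ}
    (A B : (Fin n → ℝ) × (Fin n → ℝ) → (Fin n → ℝ) × (Fin n → ℝ))
    (a : (Fin n → ℝ) × (Fin n → ℝ)) : (Fin n → ℝ) × (Fin n → ℝ) :=
  fderiv ℝ B a (A a) - fderiv ℝ A a (B a)

/-- The Nijenhuis tensor of `J^D`. -/
noncomputable def nijenhuis {n : ℕ}
    (Γ : (Fin n → ℝ) → (Fin n → ℝ) →L[ℝ] (Fin n → ℝ) →L[ℝ] (Fin n → ℝ))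
    (A B : (Fin n → ℝ) × (Fin n → ℝ) → (Fin n → ℝ) × (Fin n → ℝ))
    (a : (Fin n → ℝ) × (Fin n → ℝ)) : (Fin n → ℝ) × (Fin n → ℝ) :=
  bracket (fun p => Jstr Γ p.1 p.2 (A p)) (fun p => Jstr Γ p.1 p.2 (B p)) a
    - Jstr Γ a.1 a.2 (bracket (fun p => Jstr Γ p.1 p.2 (A p)) B a)
    - Jstr Γ a.1 a.2 (bracket A (fun p => Jstr Γ p.1 p.2 (B p)) a)
    - bracket A B a

/-- The pointwise value of the Nijenhuis tensor, in terms of torsion and curvature. -/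
noncomputable def NF {n : ℕ}
    (Γ : (Fin n → ℝ) → (Fin n → ℝ) →L[ℝ] (Fin n → ℝ) →L[ℝ] (Fin n → ℝ))
    (x ξ : Fin n → ℝ) (X Y : (Fin n → ℝ) × (Fin n → ℝ)) :
    (Fin n → ℝ) × (Fin n → ℝ) :=
  (torsion Γ x X.1 Y.1 + curv Γ x X.1 (Y.2 + Γ x Y.1 ξ) ξ
      - curv Γ x Y.1 (X.2 + Γ x X.1 ξ) ξ
      - torsion Γ x (X.2 + Γ x X.1 ξ) (Y.2 + Γ x Y.1 ξ),
   curv Γ x X.1 Y.1 ξ - torsion Γ x X.1 (Y.2 + Γ x Y.1 ξ)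
      + torsion Γ x Y.1 (X.2 + Γ x X.1 ξ)
      - curv Γ x (X.2 + Γ x X.1 ξ) (Y.2 + Γ x Y.1 ξ) ξ
      - Γ x (torsion Γ x X.1 Y.1 + curv Γ x X.1 (Y.2 + Γ x Y.1 ξ) ξ
          - curv Γ x Y.1 (X.2 + Γ x X.1 ξ) ξ
          - torsion Γ x (X.2 + Γ x X.1 ξ) (Y.2 + Γ x Y.1 ξ)) ξ)

set_option maxHeartbeats 4000000 in
lemma key {n : ℕ}
    (Γ : (Fin n → ℝ) → (Fin n → ℝ) →L[ℝ] (Fin n → ℝ) →L[ℝ] (Fin n → ℝ))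
    (A B : (Fin n → ℝ) × (Fin n → ℝ) → (Fin n → ℝ) × (Fin n → ℝ))
    (a : (Fin n → ℝ) × (Fin n → ℝ))
    (hΓ : DifferentiableAt ℝ Γ a.1) (hA : DifferentiableAt ℝ A a)
    (hB : DifferentiableAt ℝ B a) :
    nijenhuis Γ A B a = NF Γ a.1 a.2 (A a) (B a) := by
  have hΓ1 : HasFDerivAt (fun p : (Fin n → ℝ) × (Fin n → ℝ) => Γ p.1)
      ((fderiv ℝ Γ a.1).comp (ContinuousLinearMap.fst ℝ _ _)) a :=
    by
      have h1 : HasFDerivAt Γ (fderiv ℝ Γ a.1) a.1 := hΓ.hasFDerivAt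
      have h2 : HasFDerivAt (Prod.fst : (Fin n → ℝ) × (Fin n → ℝ) → Fin n → ℝ) (ContinuousLinearMap.fst ℝ (Fin n → ℝ) (Fin n → ℝ)) a := hasFDerivAt_fst
      exact @HasFDerivAt.comp ℝ _ _ _ _ _ _ _ _ _ _ Prod.fst _ a Γ _ h1 h2
  have hA1 := hA.hasFDerivAt.fst
  have hA2 := hA.hasFDerivAt.snd
  have hB1 := hB.hasFDerivAt.fst
  have hB2 := hB.hasFDerivAt.snd
  have hGA := (hΓ1.clm_apply hA1).clm_apply hasFDerivAt_snd
  have hg2A := hA2.add hGA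
  have hg3A := (hΓ1.clm_apply hg2A).clm_apply hasFDerivAt_snd
  have hJA : HasFDerivAt (fun p => Jstr Γ p.1 p.2 (A p)) _ a :=
    HasFDerivAt.prodMk (hg2A.neg) (hA1.add hg3A)
  have hGB := (hΓ1.clm_apply hB1).clm_apply hasFDerivAt_snd
  have hg2B := hB2.add hGB
  have hg3B := (hΓ1.clm_apply hg2B).clm_apply hasFDerivAt_snd
  have hJB : HasFDerivAt (fun p => Jstr Γ p.1 p.2 (B p)) _ a :=
    HasFDerivAt.prodMk (hg2B.neg) (hB1.add hg3B)
  simp only [nijenhuis, bracket, hJA.fderiv, hJB.fderiv]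
  simp only [Jstr, NF, torsion, curv, ContinuousLinearMap.add_apply,
    ContinuousLinearMap.coe_comp', Function.comp_apply, ContinuousLinearMap.flip_apply,
    ContinuousLinearMap.prod_apply, ContinuousLinearMap.neg_apply,
    ContinuousLinearMap.coe_fst', ContinuousLinearMap.coe_snd',
    map_add, map_sub, map_neg, ContinuousLinearMap.sub_apply,
    Prod.fst_add, Prod.snd_add, Prod.fst_sub, Prod.snd_sub, Prod.mk_sub_mk, Prod.mk_add_mk]
  refine Prod.ext ?_ ?_ <;> · show _ = _; simp only [Pi.add_apply, Prod.fst_add, Prod.snd_add, Prod.fst_sub, Prod.snd_sub, Prod.fst_neg, Prod.snd_neg, map_add, map_sub, map_neg, ContinuousLinearMap.add_apply, ContinuousLinearMap.sub_apply, ContinuousLinearMap.neg_apply]; abel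
set_option maxHeartbeats 1000000 in
set_option synthInstance.maxHeartbeats 400000 in
theorem statement7 (n : ℕ) (hn : 1 ≤ n) (U : Set (Fin n → ℝ)) (hU : IsOpen U)
    (g : (Fin n → ℝ) → (Fin n → ℝ) →L[ℝ] (Fin n → ℝ) →L[ℝ] ℝ)
    (hg : ContDiffOn ℝ (⊤ : ℕ∞) g U)
    (hgsymm : ∀ x ∈ U, ∀ v w : Fin n → ℝ, g x v w = g x w v)
    (hgpos : ∀ x ∈ U, ∀ v : Fin n → ℝ, v ≠ 0 → 0 < g x v v)
    (Γ : (Fin n → ℝ) → (Fin n → ℝ) →L[ℝ] (Fin n → ℝ) →L[ℝ] (Fin n → ℝ))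
    (hΓ : ContDiffOn ℝ (⊤ : ℕ∞) Γ U) :
    (∀ A B : (Fin n → ℝ) × (Fin n → ℝ) → (Fin n → ℝ) × (Fin n → ℝ),
        ContDiffOn ℝ (⊤ : ℕ∞) A {p | p.1 ∈ U} → ContDiffOn ℝ (⊤ : ℕ∞) B {p | p.1 ∈ U} →
        ∀ a : (Fin n → ℝ) × (Fin n → ℝ), a.1 ∈ U → nijenhuis Γ A B a = 0)
      ↔ (∀ x ∈ U, (∀ v w : Fin n → ℝ, torsion Γ x v w = 0)
            ∧ (∀ v w z : Fin n → ℝ, curv Γ x v w z = 0)) := by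
  have hΓd : ∀ x ∈ U, DifferentiableAt ℝ Γ x := fun x hx =>
    (hΓ.differentiableOn (by simp)).differentiableAt (hU.mem_nhds hx)
  constructor
  · intro h x hx
    have hkey : ∀ z v w : Fin n → ℝ,
        NF Γ x z (v, -Γ x v z) (w, -Γ x w z) = 0 := by
      intro z v w
      have := h (fun _ => (v, -Γ x v z)) (fun _ => (w, -Γ x w z))
        contDiffOn_const contDiffOn_const (x, z) hx
      rwa [key Γ _ _ _ (hΓd x hx) (differentiableAt_const _)
        (differentiableAt_const _)] at this
    have hT : ∀ v w : Fin n → ℝ, torsion Γ x v w = 0 := by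
      intro v w
      have := hkey 0 v w
      simp only [NF, torsion, curv, map_zero, ContinuousLinearMap.zero_apply,
        neg_add_cancel, map_neg, sub_zero, add_zero, zero_sub, neg_zero,
        sub_self, zero_add, Prod.mk_eq_zero, neg_eq_zero] at this
      simpa [torsion] using this.1
    refine ⟨hT, ?_⟩
    intro v w z
    have := hkey z v w
    simp only [NF, torsion, curv, map_zero, ContinuousLinearMap.zero_apply,
      neg_add_cancel, map_neg, sub_zero, add_zero, zero_sub, neg_zero,
      sub_self, zero_add, Prod.mk_eq_zero, neg_eq_zero] at this
    have h2 := this.2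
    have hTvw : Γ x v w - Γ x w v = 0 := by simpa [torsion] using hT v w
    simp only [hTvw, map_zero, sub_zero, add_zero, zero_add] at h2 ⊢
    simpa [curv] using h2
  · intro hflat A B hA hB a ha
    have hAa : DifferentiableAt ℝ A a :=
      ((hA.differentiableOn (by simp)).differentiableAt
        ((hU.preimage continuous_fst).mem_nhds ha))
    have hBa : DifferentiableAt ℝ B a :=
      ((hB.differentiableOn (by simp)).differentiableAt
        ((hU.preimage continuous_fst).mem_nhds ha))
    rw [key Γ A B a (hΓd a.1 ha) hAa hBa]
    obtain ⟨hT, hR⟩ := hflat a.1 ha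
    simp [NF, hT _ _, hR _ _ _, Prod.ext_iff]
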